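/- arXiv:1701.05126 — 5 statements merged into one kernel-verified Lean document; each statement's English description precedes it below -/
import Mathlib

section
/- For complex $q$ with $0<|q|<1$, the limit as $N\to\infty$ of the even-indexed partial sums $\sum_{n=0}^{2N-1}(-1)^n (q;q)_n$ of the alternating Kontsevich series exists and equals $\sum_{n=0}^\infty q^{2n+1}(q;q)_{2n}$. -/
/-!
Grouping the terms in pairs turns the partial sum up to `2N` into the `N`-th partial sum of
`∑ q^(2n+1) (q;q)_{2n}`, since `(q;q)_{2n} - (q;q)_{2n+1} = q^(2n+1) (q;q)_{2n}`. The latter series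
converges absolutely because `‖(q;q)_n‖ ≤ ∏ (1 + ‖q‖^j) ≤ exp (1 / (1 - ‖q‖))` is bounded.
-/

open Filter Topology

/-- The q-Pochhammer symbol `(q;q)_n = ∏_{j=1}^n (1 - q^j)`. -/
noncomputable def qPoch (q : ℂ) (n : ℕ) : ℂ := ∏ j ∈ Finset.range n, (1 - q ^ (j + 1))

theorem Finset.sum_range_two_mul {M : Type*} [AddCommMonoid M] (f : ℕ → M) (N : ℕ) :
    ∑ n ∈ range (2 * N), f n = ∑ n ∈ range N, (f (2 * n) + f (2 * n + 1)) := by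
  induction N with
  | zero => simp
  | succ N ih =>
    rw [Nat.mul_succ, sum_range_succ, sum_range_succ, sum_range_succ, ih, add_assoc]

theorem qPoch_succ (q : ℂ) (n : ℕ) : qPoch q (n + 1) = qPoch q n * (1 - q ^ (n + 1)) :=
  Finset.prod_range_succ _ _

theorem qPoch_two_mul_sub_succ (q : ℂ) (n : ℕ) :
    qPoch q (2 * n) - qPoch q (2 * n + 1) = q ^ (2 * n + 1) * qPoch q (2 * n) := by
  rw [qPoch_succ]
  ring

theorem sum_range_two_mul_neg_one_pow_mul_qPoch (q : ℂ) (N : ℕ) :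
    ∑ n ∈ Finset.range (2 * N), (-1 : ℂ) ^ n * qPoch q n
      = ∑ n ∈ Finset.range N, q ^ (2 * n + 1) * qPoch q (2 * n) := by
  rw [Finset.sum_range_two_mul]
  refine Finset.sum_congr rfl fun n _ => ?_
  rw [← qPoch_two_mul_sub_succ, pow_succ, pow_mul]
  simp [sub_eq_add_neg]

theorem norm_qPoch_le (q : ℂ) (hq : ‖q‖ < 1) (n : ℕ) :
    ‖qPoch q n‖ ≤ Real.exp (1 - ‖q‖)⁻¹ := by
  have hgeom := summable_geometric_of_lt_one (norm_nonneg q) hq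
  calc ‖qPoch q n‖ ≤ ∏ j ∈ Finset.range n, (1 + ‖q‖ ^ (j + 1)) := by
        refine (Finset.norm_prod_le _ _).trans (Finset.prod_le_prod (fun _ _ => norm_nonneg _)
          fun j _ => ?_)
        simpa [norm_pow] using norm_sub_le (1 : ℂ) (q ^ (j + 1))
    _ ≤ Real.exp (∑ j ∈ Finset.range n, ‖q‖ ^ (j + 1)) :=
        Real.prod_one_add_le_exp_sum _ fun _ => by positivity
    _ ≤ Real.exp (1 - ‖q‖)⁻¹ := by
        rw [Real.exp_le_exp, ← tsum_geometric_of_lt_one (norm_nonneg q) hq]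
        calc ∑ j ∈ Finset.range n, ‖q‖ ^ (j + 1)
            ≤ ∑ j ∈ Finset.range n, ‖q‖ ^ j :=
              Finset.sum_le_sum fun j _ => pow_le_pow_of_le_one (norm_nonneg q) hq.le j.le_succ
          _ ≤ ∑' j, ‖q‖ ^ j := hgeom.sum_le_tsum _ fun _ _ => by positivity

theorem summable_pow_two_mul_add_one_mul_qPoch (q : ℂ) (hq : ‖q‖ < 1) :
    Summable fun n : ℕ => q ^ (2 * n + 1) * qPoch q (2 * n) := by
  refine Summable.of_norm_bounded
    ((summable_geometric_of_lt_one (norm_nonneg q) hq).mul_left (Real.exp (1 - ‖q‖)⁻¹))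
    fun n => ?_
  rw [norm_mul, norm_pow, mul_comm]
  exact mul_le_mul (norm_qPoch_le q hq _)
    (pow_le_pow_of_le_one (norm_nonneg q) hq.le (by omega)) (by positivity) (by positivity)

theorem strangeF_even_partial_sums_general (q : ℂ) (hq : ‖q‖ < 1) :
    Summable (fun n : ℕ => q ^ (2 * n + 1) * qPoch q (2 * n)) ∧
    Tendsto (fun N : ℕ => ∑ n ∈ Finset.range (2 * N), (-1 : ℂ) ^ n * qPoch q n)
      atTop (𝓝 (∑' n : ℕ, q ^ (2 * n + 1) * qPoch q (2 * n))) := by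
  have hsum := summable_pow_two_mul_add_one_mul_qPoch q hq
  simp only [sum_range_two_mul_neg_one_pow_mul_qPoch]
  exact ⟨hsum, hsum.hasSum.tendsto_sum_nat⟩

theorem strangeF_even_partial_sums (q : ℂ) (hq0 : q ≠ 0) (hq : ‖q‖ < 1) :
    Summable (fun n : ℕ => q ^ (2 * n + 1) * qPoch q (2 * n)) ∧
    Tendsto (fun N : ℕ => ∑ n ∈ Finset.range (2 * N), (-1 : ℂ) ^ n * qPoch q n)
      atTop (𝓝 (∑' n : ℕ, q ^ (2 * n + 1) * qPoch q (2 * n))) :=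
  strangeF_even_partial_sums_general q hq
end

section
/- For complex $q$ with $0<|q|<1$, Zagier's function $\sigma(q) = 1 + \sum_{n=0}^\infty (-1)^n q^{n+1}(q;q)_n$ satisfies $\sigma(q) - (q;q)_\infty = 2\sum_{n=0}^\infty q^{2n+1}(q;q)_{2n}$. -/
/-!
Since `(q;q)_{n+1} = (q;q)_n - q^{n+1} (q;q)_n`, Euler's product telescopes:
`(q;q)_∞ = 1 - ∑ q^{n+1} (q;q)_n`, the series converging because the partial products are
bounded. Hence `σ(q) - (q;q)_∞ = ∑ ((-1)^n + 1) q^{n+1} (q;q)_n`, in which the odd terms cancel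
and the even ones double.
-/

open Filter Topology

theorem tsum_neg_one_pow_mul_add_tsum {R : Type*} [Ring R] [UniformSpace R] [IsUniformAddGroup R]
    [CompleteSpace R] [T2Space R] {f : ℕ → R} (hf : Summable f) :
    ∑' n, (-1) ^ n * f n + ∑' n, f n = 2 * ∑' n, f (2 * n) := by
  have hf₂ : HasSum (fun k ↦ f (2 * k)) (∑' k, f (2 * k)) :=
    (hf.comp_injective (mul_right_injective₀ two_ne_zero)).hasSum
  have heven : HasSum (fun k ↦ (-1) ^ (2 * k) * f (2 * k) + f (2 * k)) (2 * ∑' k, f (2 * k)) := by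
    convert hf₂.add hf₂ using 1
    · ext k
      rw [(even_two_mul k).neg_one_pow, one_mul]
    · exact two_mul _
  have hodd : HasSum (fun k ↦ (-1) ^ (2 * k + 1) * f (2 * k + 1) + f (2 * k + 1)) 0 := by
    convert hasSum_zero with k
    rw [(odd_two_mul_add_one k).neg_one_pow, neg_one_mul, neg_add_cancel]
  rw [← hf.alternating.tsum_add hf,
    (HasSum.even_add_odd (f := fun n ↦ (-1) ^ n * f n + f n) heven hodd).tsum_eq, add_zero]

theorem exists_norm_qPoch_le {q : ℂ} (hq : ‖q‖ < 1) : ∃ C, ∀ n, ‖qPoch q n‖ ≤ C := by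
  obtain ⟨C, hC⟩ := (Metric.isBounded_range_of_tendsto _
    (ModularForm.multipliable_one_sub_pow hq).tendsto_prod_tprod_nat).exists_norm_le
  exact ⟨C, fun n ↦ hC _ ⟨n, rfl⟩⟩

theorem summable_pow_succ_mul_qPoch {q : ℂ} (hq : ‖q‖ < 1) :
    Summable fun n ↦ q ^ (n + 1) * qPoch q n := by
  obtain ⟨C, hC⟩ := exists_norm_qPoch_le hq
  refine .of_norm_bounded ((summable_geometric_of_lt_one (norm_nonneg q) hq).mul_right C) fun n ↦ ?_
  rw [norm_mul, norm_pow]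
  exact mul_le_mul (pow_le_pow_of_le_one (norm_nonneg q) hq.le n.le_succ) (hC n) (norm_nonneg _)
    (pow_nonneg (norm_nonneg q) n)

theorem tprod_one_sub_pow_eq_one_sub_tsum {q : ℂ} (hq : ‖q‖ < 1) :
    ∏' j, (1 - q ^ (j + 1)) = 1 - ∑' n, q ^ (n + 1) * qPoch q n := by
  have h := summable_pow_succ_mul_qPoch hq
  simp only [qPoch, ← Nat.Iio_eq_range] at h ⊢
  exact tprod_one_sub_ordered h (ModularForm.multipliable_one_sub_pow hq)

theorem sigma_minus_product_general (q : ℂ) (hq : ‖q‖ < 1) :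
    (1 + ∑' n : ℕ, (-1 : ℂ) ^ n * q ^ (n + 1) * qPoch q n)
      - (∏' j : ℕ, (1 - q ^ (j + 1)))
      = 2 * ∑' n : ℕ, q ^ (2 * n + 1) * qPoch q (2 * n) := by
  rw [tprod_one_sub_pow_eq_one_sub_tsum hq,
    ← tsum_neg_one_pow_mul_add_tsum (summable_pow_succ_mul_qPoch hq)]
  simp only [mul_assoc]
  ring

theorem sigma_minus_product (q : ℂ) (hq0 : q ≠ 0) (hq : ‖q‖ < 1) :
    (1 + ∑' n : ℕ, (-1 : ℂ) ^ n * q ^ (n + 1) * qPoch q n)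
      - (∏' j : ℕ, (1 - q ^ (j + 1)))
      = 2 * ∑' n : ℕ, q ^ (2 * n + 1) * qPoch q (2 * n) :=
  sigma_minus_product_general q hq
end

section
/- For complex $q$ with $0<|q|<1$, the limit of the even partial sums $\sum_{n=0}^{2N-1}\frac{(-1)^n}{(-q;q)_n}$ exists and equals $\sum_{n=0}^\infty \frac{q^{2n+1}}{(-q;q)_{2n+1}}$. -/
open Filter Topology

/-- The q-Pochhammer symbol `(-q;q)_n = ∏_{j=1}^n (1 + q^j)`. -/
noncomputable def negPoch (q : ℂ) (n : ℕ) : ℂ := ∏ j ∈ Finset.range n, (1 + q ^ (j + 1))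

/-! The pairs `1/(-q;q)_{2n} - 1/(-q;q)_{2n+1}` telescope the even partial sums into the partial
sums of `∑ q^{2n+1}/(-q;q)_{2n+1}`, and the latter series converges by the ratio test: the ratio
of consecutive terms is `q² / ((1 + q^{2n+2})(1 + q^{2n+3})) → q²`. -/

theorem summable_of_succ_eq_mul_of_tendsto_norm {R : Type*} [NormedRing R] [CompleteSpace R]
    {f g : ℕ → R} {l : ℝ} (hfg : ∀ n, f (n + 1) = g n * f n)
    (hg : Tendsto (fun n => ‖g n‖) atTop (𝓝 l)) (hl : l < 1) : Summable f := by
  obtain ⟨r, hlr, hr⟩ := exists_between hl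
  refine summable_of_ratio_norm_eventually_le hr ?_
  filter_upwards [hg.eventually (gt_mem_nhds hlr)] with n hn
  rw [hfg]
  exact (norm_mul_le _ _).trans (by gcongr)

section

variable {q : ℂ}

theorem one_add_pow_succ_ne_zero (hq : ‖q‖ < 1) (j : ℕ) : 1 + q ^ (j + 1) ≠ 0 := by
  intro h
  have hnorm : ‖q ^ (j + 1)‖ < 1 := by
    rw [norm_pow]
    exact pow_lt_one₀ (norm_nonneg q) hq j.succ_ne_zero
  rw [eq_neg_of_add_eq_zero_right h] at hnorm
  simp at hnorm

theorem negPoch_ne_zero (hq : ‖q‖ < 1) (n : ℕ) : negPoch q n ≠ 0 :=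
  Finset.prod_ne_zero_iff.mpr fun j _ => one_add_pow_succ_ne_zero hq j

theorem negPoch_succ (q : ℂ) (n : ℕ) : negPoch q (n + 1) = negPoch q n * (1 + q ^ (n + 1)) :=
  Finset.prod_range_succ _ n

theorem inv_negPoch_sub_inv_negPoch_succ (hq : ‖q‖ < 1) (n : ℕ) :
    1 / negPoch q n - 1 / negPoch q (n + 1) = q ^ (n + 1) / negPoch q (n + 1) := by
  have hP := negPoch_ne_zero hq n
  have hfactor := one_add_pow_succ_ne_zero hq n
  rw [negPoch_succ]
  field_simp
  ring

theorem sum_range_two_mul_neg_one_pow_div_negPoch (hq : ‖q‖ < 1) (N : ℕ) :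
    ∑ n ∈ Finset.range (2 * N), (-1 : ℂ) ^ n / negPoch q n
      = ∑ n ∈ Finset.range N, q ^ (2 * n + 1) / negPoch q (2 * n + 1) := by
  induction N with
  | zero => simp
  | succ N ih =>
    rw [Nat.mul_succ, Finset.sum_range_succ, Finset.sum_range_succ, Finset.sum_range_succ, ih,
      pow_succ, pow_mul, neg_one_sq, one_pow, add_assoc, ← inv_negPoch_sub_inv_negPoch_succ hq]
    ring

theorem pow_odd_succ_div_negPoch (q : ℂ) (n : ℕ) :
    q ^ (2 * (n + 1) + 1) / negPoch q (2 * (n + 1) + 1)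
      = q ^ 2 / ((1 + q ^ (2 * n + 2)) * (1 + q ^ (2 * n + 3)))
        * (q ^ (2 * n + 1) / negPoch q (2 * n + 1)) := by
  rw [show 2 * (n + 1) + 1 = 2 * n + 1 + 1 + 1 by ring, negPoch_succ, negPoch_succ,
    div_mul_div_comm, ← pow_add]
  ring_nf

theorem tendsto_sq_div_one_add_pow_mul_one_add_pow (hq : ‖q‖ < 1) :
    Tendsto (fun n : ℕ => q ^ 2 / ((1 + q ^ (2 * n + 2)) * (1 + q ^ (2 * n + 3))))
      atTop (𝓝 (q ^ 2)) := by
  have hpow (c : ℕ) : Tendsto (fun n : ℕ => q ^ (2 * n + c)) atTop (𝓝 0) :=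
    (tendsto_pow_atTop_nhds_zero_of_norm_lt_one hq).comp
      (tendsto_atTop_mono (fun n => show n ≤ 2 * n + c by omega) tendsto_id)
  have hden := ((hpow 2).const_add 1).mul ((hpow 3).const_add 1)
  rw [add_zero, mul_one] at hden
  have hquot := (tendsto_const_nhds (x := q ^ 2)).div hden one_ne_zero
  rwa [div_one] at hquot

theorem summable_pow_odd_div_negPoch (hq : ‖q‖ < 1) :
    Summable (fun n : ℕ => q ^ (2 * n + 1) / negPoch q (2 * n + 1)) := by
  refine summable_of_succ_eq_mul_of_tendsto_norm (pow_odd_succ_div_negPoch q)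
    (tendsto_sq_div_one_add_pow_mul_one_add_pow hq).norm ?_
  rw [norm_pow]
  exact pow_lt_one₀ (norm_nonneg q) hq two_ne_zero

end

theorem strangePhi_even_partial_sums_general (q : ℂ) (hq : ‖q‖ < 1) :
    Summable (fun n : ℕ => q ^ (2 * n + 1) / negPoch q (2 * n + 1)) ∧
    Tendsto (fun N : ℕ => ∑ n ∈ Finset.range (2 * N), (-1 : ℂ) ^ n / negPoch q n)
      atTop (𝓝 (∑' n : ℕ, q ^ (2 * n + 1) / negPoch q (2 * n + 1))) := by
  have hsum := summable_pow_odd_div_negPoch hq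
  refine ⟨hsum, ?_⟩
  simpa only [sum_range_two_mul_neg_one_pow_div_negPoch hq] using hsum.hasSum.tendsto_sum_nat

theorem strangePhi_even_partial_sums (q : ℂ) (hq0 : q ≠ 0) (hq : ‖q‖ < 1) :
    Summable (fun n : ℕ => q ^ (2 * n + 1) / negPoch q (2 * n + 1)) ∧
    Tendsto (fun N : ℕ => ∑ n ∈ Finset.range (2 * N), (-1 : ℂ) ^ n / negPoch q n)
      atTop (𝓝 (∑' n : ℕ, q ^ (2 * n + 1) / negPoch q (2 * n + 1))) :=
  strangePhi_even_partial_sums_general q hq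
end

section
/- For complex $q$ with $0<|q|<1$, the Cesàro sum of the divergent series $\widetilde{\phi}(q)=\sum_{n\geq 0}\frac{(-1)^n}{(-q;q)_n}$ exists and equals $\frac{1}{2}f(q)$, where $f(q) = 1 - \sum_{n=1}^\infty \frac{(-1)^n q^n}{(-q;q)_n}$. -/
/-!
Write `a n = (-1)^n / (-q;q)_n`. Then `a n + a (n+1) = (-1)^n q^(n+1) / (-q;q)_(n+1)`, which is
summable since `(-q;q)_n` tends to a nonzero infinite product. So consecutive partial sums satisfy
`S k + S (k+1) → 1 + ∑ (a n + a (n+1)) = f(q)`, and whenever `S k + S (k+1) → L` the Cesàro means of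
`S` tend to `L / 2`: the increments of `(-1)^k (S k - L/2)` tend to `0`, so `S k = o(k)`, and
`2 ∑_{k<N} S k` differs from `∑_{k<N} (S k + S (k+1))` by `S 0 - S N`.
-/

open Filter Topology

open Finset

theorem sum_range_succ_add_sum_range_succ_succ {M : Type*} [AddCommGroup M] (a : ℕ → M) (k : ℕ) :
    ∑ n ∈ range (k + 1), a n + ∑ n ∈ range (k + 1 + 1), a n
      = a 0 + ∑ n ∈ range (k + 1), (a n + a (n + 1)) := by
  rw [sum_add_distrib, sum_range_succ' a (k + 1)]
  abel

section Cesaro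

variable {E : Type*} [NormedAddCommGroup E] [NormedSpace ℝ E]

theorem tendsto_inv_smul_const_nhds_zero (c : E) :
    Tendsto (fun n : ℕ => (n⁻¹ : ℝ) • c) atTop (𝓝 0) := by
  simpa using (tendsto_inv_atTop_zero (𝕜 := ℝ)).comp tendsto_natCast_atTop_atTop |>.smul_const c

theorem tendsto_inv_smul_of_tendsto_sub {x : ℕ → E} {l : E}
    (h : Tendsto (fun k => x (k + 1) - x k) atTop (𝓝 l)) :
    Tendsto (fun n : ℕ => (n⁻¹ : ℝ) • x n) atTop (𝓝 l) := by
  convert (tendsto_inv_smul_const_nhds_zero (x 0)).add h.cesaro_smul using 2 with n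
  · rw [sum_range_sub, ← smul_add, add_sub_cancel]
  · rw [zero_add]

theorem tendsto_inv_smul_of_tendsto_add_succ {S : ℕ → E} {L : E}
    (h : Tendsto (fun k => S k + S (k + 1)) atTop (𝓝 L)) :
    Tendsto (fun n : ℕ => (n⁻¹ : ℝ) • S n) atTop (𝓝 0) := by
  set T : ℕ → E := fun k => (-1 : ℝ) ^ k • (S k - (2⁻¹ : ℝ) • L)
  have hT : Tendsto (fun k => T (k + 1) - T k) atTop (𝓝 0) := by
    rw [tendsto_zero_iff_norm_tendsto_zero]
    convert (tendsto_zero_iff_norm_tendsto_zero.1 (tendsto_sub_nhds_zero_iff.2 h)) using 2 with k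
    have : T (k + 1) - T k = (-1 : ℝ) ^ (k + 1) • (S k + S (k + 1) - L) := by
      simp only [T, pow_succ]
      module
    simp [this, norm_smul]
  have hTS : Tendsto (fun n : ℕ => (n⁻¹ : ℝ) • (S n - (2⁻¹ : ℝ) • L)) atTop (𝓝 0) := by
    rw [tendsto_zero_iff_norm_tendsto_zero]
    convert tendsto_zero_iff_norm_tendsto_zero.1 (tendsto_inv_smul_of_tendsto_sub hT) using 2 with n
    simp [T, norm_smul]
  simpa [smul_sub] using hTS.add (tendsto_inv_smul_const_nhds_zero ((2⁻¹ : ℝ) • L))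

theorem tendsto_cesaro_of_tendsto_add_succ {S : ℕ → E} {L : E}
    (h : Tendsto (fun k => S k + S (k + 1)) atTop (𝓝 L)) :
    Tendsto (fun N : ℕ => (N⁻¹ : ℝ) • ∑ k ∈ range N, S k) atTop (𝓝 ((2⁻¹ : ℝ) • L)) := by
  have hsum : ∀ N, ∑ k ∈ range N, (S k + S (k + 1))
      = (2 : ℝ) • ∑ k ∈ range N, S k + (S N - S 0) := by
    intro N
    rw [sum_add_distrib, ← sum_range_succ_sub_top, sum_range_succ']
    module
  have hlim := (h.cesaro_smul.sub (tendsto_inv_smul_of_tendsto_add_succ h)).add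
    (tendsto_inv_smul_const_nhds_zero (S 0))
  convert hlim.const_smul (2⁻¹ : ℝ) using 2 with N
  · rw [hsum]
    module
  · simp

theorem tendsto_cesaro_of_summable_add_succ {a : ℕ → E} (h : Summable fun n => a n + a (n + 1)) :
    Tendsto (fun N : ℕ => (N⁻¹ : ℝ) • ∑ k ∈ range N, ∑ n ∈ range (k + 1), a n) atTop
      (𝓝 ((2⁻¹ : ℝ) • (a 0 + ∑' n, (a n + a (n + 1))))) := by
  apply tendsto_cesaro_of_tendsto_add_succ
  simp_rw [sum_range_succ_add_sum_range_succ_succ]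
  exact tendsto_const_nhds.add (h.hasSum.tendsto_sum_nat.comp (tendsto_add_atTop_nat 1))

end Cesaro

namespace negPoch

variable {q : ℂ}

@[simp]
theorem zero : negPoch q 0 = 1 :=
  prod_range_zero _

theorem succ (n : ℕ) : negPoch q (n + 1) = negPoch q n * (1 + q ^ (n + 1)) :=
  prod_range_succ _ _

theorem one_add_pow_succ_ne_zero (hq : ‖q‖ < 1) (j : ℕ) : 1 + q ^ (j + 1) ≠ 0 := by
  rw [← sub_neg_eq_add]
  refine (isUnit_one_sub_of_norm_lt_one ?_).ne_zero
  rw [norm_neg, norm_pow]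
  exact pow_lt_one₀ (norm_nonneg q) hq j.succ_ne_zero

theorem ne_zero (hq : ‖q‖ < 1) (n : ℕ) : negPoch q n ≠ 0 :=
  prod_ne_zero_iff.2 fun j _ => one_add_pow_succ_ne_zero hq j

theorem summable_norm_pow_succ (hq : ‖q‖ < 1) : Summable fun j : ℕ => ‖q ^ (j + 1)‖ :=
  (summable_nat_add_iff 1).2 (summable_norm_geometric_of_norm_lt_one hq)

theorem tendsto_tprod (hq : ‖q‖ < 1) :
    Tendsto (negPoch q) atTop (𝓝 (∏' j : ℕ, (1 + q ^ (j + 1)))) :=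
  (multipliable_one_add_of_summable (summable_norm_pow_succ hq)).tendsto_prod_tprod_nat

theorem tprod_ne_zero (hq : ‖q‖ < 1) : ∏' j : ℕ, (1 + q ^ (j + 1)) ≠ 0 :=
  tprod_one_add_ne_zero_of_summable (one_add_pow_succ_ne_zero hq) (summable_norm_pow_succ hq)

theorem summable_norm_inv_mul_pow (hq : ‖q‖ < 1) :
    Summable fun n => ‖(negPoch q n)⁻¹ * q ^ n‖ := by
  refine summable_norm_mul_geometric_of_norm_lt_one' (k := 0) hq ?_
  simpa using ((tendsto_tprod hq).inv₀ (tprod_ne_zero hq)).isBigO_one ℂ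

theorem neg_one_pow_div_add_succ (hq : ‖q‖ < 1) (n : ℕ) :
    (-1 : ℂ) ^ n / negPoch q n + (-1) ^ (n + 1) / negPoch q (n + 1)
      = -((-1) ^ (n + 1) * q ^ (n + 1) / negPoch q (n + 1)) := by
  have := ne_zero hq n
  have := one_add_pow_succ_ne_zero hq n
  rw [succ]
  field_simp
  ring

end negPoch

theorem cesaro_strangePhi_general (q : ℂ) (hq : ‖q‖ < 1) :
    Tendsto (fun N : ℕ =>
        (∑ k ∈ Finset.range N, ∑ n ∈ Finset.range (k + 1), (-1 : ℂ) ^ n / negPoch q n) / N)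
      atTop
      (𝓝 ((1 - ∑' n : ℕ, (-1 : ℂ) ^ (n + 1) * q ^ (n + 1) / negPoch q (n + 1)) / 2)) := by
  have hw : Summable fun n => (-1 : ℂ) ^ (n + 1) * q ^ (n + 1) / negPoch q (n + 1) := by
    refine .of_norm <|
      (summable_nat_add_iff 1).2 (negPoch.summable_norm_inv_mul_pow hq) |>.congr fun n => ?_
    simp [div_eq_mul_inv, mul_comm]
  have h := tendsto_cesaro_of_summable_add_succ (a := fun n => (-1 : ℂ) ^ n / negPoch q n)
    (by simpa only [negPoch.neg_one_pow_div_add_succ hq] using hw.neg)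
  simp only [negPoch.neg_one_pow_div_add_succ hq, tsum_neg, pow_zero, negPoch.zero, div_one] at h
  convert h using 2 <;> rw [Complex.real_smul] <;> push_cast <;> ring

theorem cesaro_strangePhi (q : ℂ) (hq0 : q ≠ 0) (hq : ‖q‖ < 1) :
    Tendsto (fun N : ℕ =>
        (∑ k ∈ Finset.range N, ∑ n ∈ Finset.range (k + 1), (-1 : ℂ) ^ n / negPoch q n) / N)
      atTop
      (𝓝 ((1 - ∑' n : ℕ, (-1 : ℂ) ^ (n + 1) * q ^ (n + 1) / negPoch q (n + 1)) / 2)) :=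
  cesaro_strangePhi_general q hq
end

section
/- For complex $q$ with $|q|<1$, Andrews' identity holds: $\sum_{n=0}^\infty \frac{q^{n(n+1)/2}}{(-q;q)_n} = 1 + \sum_{n=0}^\infty (-1)^n q^{n+1}(q;q)_n$, both sides converging absolutely. -/
/-!
Put `u k = q^(k+1) / (1 + q^(k+1))` and generalise both sides to
`F k = ∑ₙ u k ⋯ u (k+n-1)` and `H k = 1 + ∑ₙ (-1)^n q^((n+1)(k+1)) (q;q)_n`, so that the
identity is `F 0 = H 0`. Both families satisfy `X k = 1 + u k * X (k+1)`: for `F` by splitting off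
the first factor, for `H` by telescoping `(q;q)_(n+1) = (q;q)_n (1 - q^(n+1))`. Both are bounded
uniformly in `k`, so `F k - H k = u k * (F (k+1) - H (k+1))` with `u k → 0` forces `F k = H k`.
-/

open Filter Topology

open Finset

namespace Andrews

theorem eq_zero_of_eq_mul_succ {R : Type*} [NormedRing R] {d u : ℕ → R} {M : ℝ}
    (hM : ∀ k, ‖d k‖ ≤ M) (hd : ∀ k, d k = u k * d (k + 1)) (hu : Tendsto u atTop (𝓝 0))
    (k : ℕ) : d k = 0 := by
  obtain ⟨N, hN⟩ := eventually_atTop.1 <|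
    (tendsto_zero_iff_norm_tendsto_zero.1 hu).eventually_le_const (by norm_num : (0 : ℝ) < 1 / 2)
  have hhalf : ∀ m k, N ≤ k → ‖d k‖ ≤ M * (1 / 2) ^ m := by
    intro m
    induction m with
    | zero => simpa using fun k _ => hM k
    | succ m ih =>
      intro k hk
      calc ‖d k‖ = ‖u k * d (k + 1)‖ := by rw [← hd]
        _ ≤ ‖u k‖ * ‖d (k + 1)‖ := norm_mul_le _ _
        _ ≤ 1 / 2 * (M * (1 / 2) ^ m) :=
          mul_le_mul (hN k hk) (ih _ (by omega)) (norm_nonneg _) (by norm_num)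
        _ = M * (1 / 2) ^ (m + 1) := by ring
  have htail : ∀ k, N ≤ k → d k = 0 := fun k hk =>
    norm_le_zero_iff.1 <| ge_of_tendsto' (by
      simpa using (tendsto_pow_atTop_nhds_zero_of_lt_one (by norm_num)
        (by norm_num : (1 / 2 : ℝ) < 1)).const_mul M) fun m => hhalf m k hk
  have hbelow : ∀ n k, N ≤ k + n → d k = 0 := by
    intro n
    induction n with
    | zero => exact htail
    | succ n ih => intro k hk; rw [hd, ih (k + 1) (by omega), mul_zero]
  exact hbelow N k (by omega)

theorem summable_prod_range_of_tendsto_zero {v : ℕ → ℝ} (hv₀ : ∀ j, 0 ≤ v j)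
    (hv : Tendsto v atTop (𝓝 0)) : Summable fun n => ∏ j ∈ range n, v j := by
  refine summable_of_ratio_norm_eventually_le (r := 1 / 2) (by norm_num) ?_
  filter_upwards [hv.eventually_le_const (by norm_num : (0 : ℝ) < 1 / 2)] with n hn
  rw [prod_range_succ, norm_mul, Real.norm_of_nonneg (hv₀ n), mul_comm]
  exact mul_le_mul_of_nonneg_right hn (norm_nonneg _)

theorem sum_range_succ_id (n : ℕ) : ∑ j ∈ range n, (j + 1) = n * (n + 1) / 2 := by
  have h := sum_range_id (n + 1)
  rw [sum_range_succ', add_zero, Nat.add_sub_cancel] at h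
  rw [h, mul_comm]

variable (q : ℂ)

theorem one_sub_norm_le_norm_one_add_pow (hq : ‖q‖ < 1) (m : ℕ) :
    1 - ‖q‖ ≤ ‖1 + q ^ (m + 1)‖ := by
  have hpow : ‖q ^ (m + 1)‖ ≤ ‖q‖ := by
    simpa [norm_pow] using pow_le_pow_of_le_one (norm_nonneg q) hq.le (by omega : 1 ≤ m + 1)
  have := norm_sub_norm_le (1 : ℂ) (-q ^ (m + 1))
  rw [norm_one, norm_neg, sub_neg_eq_add] at this
  linarith

noncomputable def u (k : ℕ) : ℂ := q ^ (k + 1) / (1 + q ^ (k + 1))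

theorem norm_u_le (hq : ‖q‖ < 1) (k : ℕ) : ‖u q k‖ ≤ ‖q‖ ^ (k + 1) / (1 - ‖q‖) := by
  rw [u, norm_div, norm_pow]
  exact div_le_div_of_nonneg_left (by positivity) (by linarith)
    (one_sub_norm_le_norm_one_add_pow q hq k)

theorem tendsto_norm_pow_succ_div (hq : ‖q‖ < 1) :
    Tendsto (fun k : ℕ => ‖q‖ ^ (k + 1) / (1 - ‖q‖)) atTop (𝓝 0) := by
  simpa using ((tendsto_pow_atTop_nhds_zero_of_lt_one (norm_nonneg q) hq).comp
    (tendsto_add_atTop_nat 1)).div_const (1 - ‖q‖)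

theorem tendsto_u (hq : ‖q‖ < 1) : Tendsto (u q) atTop (𝓝 0) :=
  squeeze_zero_norm (norm_u_le q hq) (tendsto_norm_pow_succ_div q hq)

theorem prod_u_eq (n : ℕ) : ∏ j ∈ range n, u q j = q ^ (n * (n + 1) / 2) / negPoch q n := by
  rw [negPoch, ← sum_range_succ_id, ← prod_pow_eq_pow_sum, ← prod_div_distrib]
  rfl

noncomputable def F (k : ℕ) : ℂ := ∑' n, ∏ j ∈ range n, u q (k + j)

theorem norm_prod_u_le (hq : ‖q‖ < 1) (k n : ℕ) :
    ‖∏ j ∈ range n, u q (k + j)‖ ≤ ∏ j ∈ range n, ‖q‖ ^ (j + 1) / (1 - ‖q‖) := by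
  rw [norm_prod]
  refine prod_le_prod (fun _ _ => norm_nonneg _) fun j _ => (norm_u_le q hq _).trans ?_
  gcongr ?_ / _
  exact pow_le_pow_of_le_one (norm_nonneg q) hq.le (by omega)

theorem summable_prod_norm_pow_succ_div (hq : ‖q‖ < 1) :
    Summable fun n => ∏ j ∈ range n, ‖q‖ ^ (j + 1) / (1 - ‖q‖) :=
  summable_prod_range_of_tendsto_zero (fun _ => div_nonneg (by positivity) (by linarith))
    (tendsto_norm_pow_succ_div q hq)

theorem summable_norm_prod_u (hq : ‖q‖ < 1) (k : ℕ) :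
    Summable fun n => ‖∏ j ∈ range n, u q (k + j)‖ :=
  .of_nonneg_of_le (fun _ => norm_nonneg _) (norm_prod_u_le q hq k)
    (summable_prod_norm_pow_succ_div q hq)

theorem norm_F_le (hq : ‖q‖ < 1) (k : ℕ) :
    ‖F q k‖ ≤ ∑' n, ∏ j ∈ range n, ‖q‖ ^ (j + 1) / (1 - ‖q‖) :=
  tsum_of_norm_bounded (summable_prod_norm_pow_succ_div q hq).hasSum (norm_prod_u_le q hq k)

theorem F_eq_one_add (hq : ‖q‖ < 1) (k : ℕ) : F q k = 1 + u q k * F q (k + 1) := by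
  rw [F, (summable_norm_prod_u q hq k).of_norm.tsum_eq_zero_add, prod_range_zero, F,
    ← tsum_mul_left]
  congr 1
  refine tsum_congr fun n => ?_
  rw [prod_range_succ', add_zero, mul_comm]
  simp only [← add_assoc, add_right_comm k]

noncomputable def t (k n : ℕ) : ℂ := (-1) ^ n * q ^ ((n + 1) * (k + 1)) * qPoch q n

noncomputable def H (k : ℕ) : ℂ := 1 + ∑' n, t q k n

theorem exists_norm_qPoch_le (hq : ‖q‖ < 1) : ∃ C, ∀ n, ‖qPoch q n‖ ≤ C := by
  have hgeom : Summable fun j : ℕ => ‖q‖ ^ (j + 1) :=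
    (summable_nat_add_iff 1).2 (summable_geometric_of_lt_one (norm_nonneg q) hq)
  refine ⟨Real.exp (∑' j : ℕ, ‖q‖ ^ (j + 1)), fun n => ?_⟩
  calc ‖qPoch q n‖ ≤ ∏ j ∈ range n, (1 + ‖q‖ ^ (j + 1)) := by
        rw [qPoch, norm_prod]
        refine prod_le_prod (fun _ _ => norm_nonneg _) fun j _ => ?_
        simpa using norm_sub_le (1 : ℂ) (q ^ (j + 1))
    _ ≤ Real.exp (∑ j ∈ range n, ‖q‖ ^ (j + 1)) :=
        Real.prod_one_add_le_exp_sum _ fun _ => by positivity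
    _ ≤ Real.exp (∑' j : ℕ, ‖q‖ ^ (j + 1)) :=
        Real.exp_le_exp.2 (hgeom.sum_le_tsum _ fun _ _ => by positivity)

theorem norm_t_le (hq : ‖q‖ < 1) {C : ℝ} (hC : ∀ n, ‖qPoch q n‖ ≤ C) (k n : ℕ) :
    ‖t q k n‖ ≤ C * ‖q‖ ^ (n + 1) := by
  rw [t, norm_mul, norm_mul, norm_pow, norm_pow, norm_neg, norm_one, one_pow, one_mul, mul_comm]
  exact mul_le_mul (hC n) (pow_le_pow_of_le_one (norm_nonneg q) hq.le
    (Nat.le_mul_of_pos_right _ (by omega))) (by positivity) ((norm_nonneg _).trans (hC 0))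

theorem summable_norm_t (hq : ‖q‖ < 1) (k : ℕ) : Summable fun n => ‖t q k n‖ := by
  obtain ⟨C, hC⟩ := exists_norm_qPoch_le q hq
  exact .of_nonneg_of_le (fun _ => norm_nonneg _) (norm_t_le q hq hC k)
    (((summable_nat_add_iff 1).2 (summable_geometric_of_lt_one (norm_nonneg q) hq)).mul_left C)

theorem exists_norm_H_le (hq : ‖q‖ < 1) : ∃ M, ∀ k, ‖H q k‖ ≤ M := by
  obtain ⟨C, hC⟩ := exists_norm_qPoch_le q hq
  have hgeom := ((summable_nat_add_iff 1).2
    (summable_geometric_of_lt_one (norm_nonneg q) hq)).mul_left C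
  refine ⟨1 + ∑' n : ℕ, C * ‖q‖ ^ (n + 1), fun k => ?_⟩
  calc ‖H q k‖ ≤ ‖(1 : ℂ)‖ + ‖∑' n, t q k n‖ := norm_add_le _ _
    _ ≤ 1 + ∑' n : ℕ, C * ‖q‖ ^ (n + 1) := by
      rw [norm_one]
      exact add_le_add_right (tsum_of_norm_bounded hgeom.hasSum (norm_t_le q hq hC k)) 1

theorem t_succ_add (k n : ℕ) :
    t q k (n + 1) + q ^ (k + 1) * t q k n = q ^ (k + 1) * t q (k + 1) n := by
  have hP : qPoch q (n + 1) = qPoch q n * (1 - q ^ (n + 1)) := prod_range_succ _ _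
  simp only [t, hP]
  ring

theorem H_eq_one_add (hq : ‖q‖ < 1) (k : ℕ) : H q k = 1 + u q k * H q (k + 1) := by
  set S := ∑' n, t q k n
  set S' := ∑' n, t q (k + 1) n
  have hS : HasSum (t q k) S := (summable_norm_t q hq k).of_norm.hasSum
  have hshift : HasSum (fun n => t q k (n + 1)) (S - q ^ (k + 1)) := by
    simpa [t, qPoch] using (hasSum_nat_add_iff' 1).2 hS
  have hlhs := hshift.add (hS.mul_left (q ^ (k + 1)))
  simp only [t_succ_add] at hlhs
  -- the recursion multiplied by `1 + q^(k+1)`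
  have hkey := hlhs.unique ((summable_norm_t q hq (k + 1)).of_norm.hasSum.mul_left (q ^ (k + 1)))
  have hne : 1 + q ^ (k + 1) ≠ 0 := fun h => by
    have := one_sub_norm_le_norm_one_add_pow q hq k
    rw [h, norm_zero] at this
    linarith
  rw [H, H, u]
  field_simp
  linear_combination hkey

end Andrews

open Andrews in
theorem andrews_identity (q : ℂ) (hq : ‖q‖ < 1) :
    Summable (fun n : ℕ => ‖q ^ (n * (n + 1) / 2) / negPoch q n‖) ∧
    Summable (fun n : ℕ => ‖(-1 : ℂ) ^ n * q ^ (n + 1) * qPoch q n‖) ∧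
    (∑' n : ℕ, q ^ (n * (n + 1) / 2) / negPoch q n)
      = 1 + ∑' n : ℕ, (-1 : ℂ) ^ n * q ^ (n + 1) * qPoch q n := by
  have hF : ∀ n, ∏ j ∈ range n, u q (0 + j) = q ^ (n * (n + 1) / 2) / negPoch q n := by
    simpa using prod_u_eq q
  have ht : ∀ n, t q 0 n = (-1) ^ n * q ^ (n + 1) * qPoch q n := by simp [t]
  refine ⟨by simpa only [hF] using summable_norm_prod_u q hq 0,
    by simpa only [ht] using summable_norm_t q hq 0, ?_⟩
  obtain ⟨M, hM⟩ := exists_norm_H_le q hq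
  have hFH := eq_zero_of_eq_mul_succ (d := fun k => F q k - H q k)
    (fun k => (norm_sub_le _ _).trans (add_le_add (norm_F_le q hq k) (hM k)))
    (fun k => by simp only [F_eq_one_add q hq k, H_eq_one_add q hq k]; ring) (tendsto_u q hq) 0
  simpa only [F, H, hF, ht, sub_eq_zero] using hFH
end
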